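/- Let $\mu = \mathcal{N}(m,\Gamma)$ on $\mathbb{R}^d$ and $K,Q,V \in \mathbb{R}^{d\times d}$. Then the pushforward of $\mu$ through the map $z \mapsto T^{K,Q,V}[\mu](z)$ is the Gaussian measure $\mathcal{N}\big(V(\mathrm{I}_d + \Gamma K^\top Q) m,\ (V\Gamma K^\top Q)\,\Gamma\,(V\Gamma K^\top Q)^\top\big)$. -/

import Mathlib

/-!
Write `z' = m + A x` with `x` standard Gaussian. The attention weight `exp ⟪Q z, K z'⟫` is then
`exp ⟪u, x⟫` with `u = Aᵀ Kᵀ Q z`, up to a factor that does not depend on `x` and cancels in the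
normalisation. Tilting the standard Gaussian by `exp ⟪u, x⟫` moves its mean to `u` (in each
coordinate this is the derivative of the Gaussian moment generating function), so
`T[μ](z) = V (m + A u) = V m + V Γ Kᵀ Q z` is affine in `z`, and the image of a Gaussian under an
affine map is Gaussian.
-/

open MeasureTheory ProbabilityTheory Matrix

noncomputable def stdGaussian (d : ℕ) : Measure (Fin d → ℝ) :=
  Measure.pi fun _ => gaussianReal 0 1

/-- The Gaussian measure `N(m, A * Aᵀ)` on `ℝ^d`, realized as the pushforward of the
standard Gaussian by the affine map `x ↦ m + A x`. -/
noncomputable def gaussianVec {d : ℕ} (m : Fin d → ℝ) (A : Matrix (Fin d) (Fin d) ℝ) :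
    Measure (Fin d → ℝ) :=
  (stdGaussian d).map (fun x => m + A.mulVec x)

/-- Softmax attention with prompt measure `μ`, query token `z`, and parameters `K, Q, V`. -/
noncomputable def attn {d : ℕ} (K Q V : Matrix (Fin d) (Fin d) ℝ)
    (μ : Measure (Fin d → ℝ)) (z : Fin d → ℝ) : Fin d → ℝ :=
  (∫ z', Real.exp ((Q.mulVec z) ⬝ᵥ (K.mulVec z')) ∂μ)⁻¹ •
    ∫ z', Real.exp ((Q.mulVec z) ⬝ᵥ (K.mulVec z')) • V.mulVec z' ∂μ

open Real
open scoped NNReal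

namespace ProbabilityTheory
variable {μ : ℝ} {v : ℝ≥0}

lemma integral_exp_mul_gaussianReal (t : ℝ) :
    ∫ x, exp (t * x) ∂gaussianReal μ v = exp (μ * t + v * t ^ 2 / 2) :=
  congrFun mgf_id_gaussianReal t

lemma integrable_mul_exp_mul_gaussianReal (t : ℝ) :
    Integrable (fun x ↦ x * exp (t * x)) (gaussianReal μ v) := by
  simpa using integrable_pow_mul_exp_of_mem_interior_integrableExpSet (X := id)
    (μ := gaussianReal μ v) (by simp) 1

lemma integral_mul_exp_mul_gaussianReal (t : ℝ) :
    ∫ x, x * exp (t * x) ∂gaussianReal μ v = (μ + v * t) * exp (μ * t + v * t ^ 2 / 2) := by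
  have hexponent : HasDerivAt (fun s ↦ μ * s + v * s ^ 2 / 2) (μ + v * t) t :=
    (((hasDerivAt_id' t).const_mul μ).fun_add
      (((hasDerivAt_pow 2 t).const_mul (v : ℝ)).div_const 2)).congr_deriv (by push_cast; ring)
  rw [mul_comm (μ + v * t), ← hexponent.exp.deriv, ← mgf_id_gaussianReal, deriv_mgf (by simp)]
  rfl

end ProbabilityTheory

section StdGaussian

variable {d : ℕ}

instance : IsProbabilityMeasure (stdGaussian d) :=
  inferInstanceAs (IsProbabilityMeasure (Measure.pi _))

lemma integral_stdGaussian_prod (f : Fin d → ℝ → ℝ) :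
    ∫ x, ∏ i, f i (x i) ∂stdGaussian d = ∏ i, ∫ t, f i t ∂gaussianReal 0 1 :=
  integral_fintype_prod_eq_prod f

lemma integrable_stdGaussian_prod {f : Fin d → ℝ → ℝ}
    (hf : ∀ i, Integrable (f i) (gaussianReal 0 1)) :
    Integrable (fun x ↦ ∏ i, f i (x i)) (stdGaussian d) :=
  Integrable.fintype_prod hf

lemma exp_dotProduct_eq_prod (u x : Fin d → ℝ) : exp (u ⬝ᵥ x) = ∏ i, exp (u i * x i) :=
  exp_sum _ _

lemma exp_dotProduct_mul_apply_eq_prod (u x : Fin d → ℝ) (j : Fin d) :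
    exp (u ⬝ᵥ x) * x j = ∏ i, (if i = j then x i else 1) * exp (u i * x i) := by
  rw [Finset.prod_mul_distrib, Finset.prod_ite_eq' Finset.univ j, if_pos (Finset.mem_univ j),
    exp_dotProduct_eq_prod, mul_comm]

lemma prod_exp_sq_div_two (u : Fin d → ℝ) : ∏ i, exp (u i ^ 2 / 2) = exp (u ⬝ᵥ u / 2) := by
  rw [← exp_sum, dotProduct, Finset.sum_div]
  simp_rw [sq]

lemma integrable_exp_dotProduct (u : Fin d → ℝ) :
    Integrable (fun x ↦ exp (u ⬝ᵥ x)) (stdGaussian d) := by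
  simp_rw [exp_dotProduct_eq_prod]
  exact integrable_stdGaussian_prod fun i ↦ integrable_exp_mul_gaussianReal (u i)

lemma integral_exp_dotProduct (u : Fin d → ℝ) :
    ∫ x, exp (u ⬝ᵥ x) ∂stdGaussian d = exp (u ⬝ᵥ u / 2) := by
  simp_rw [exp_dotProduct_eq_prod]
  rw [integral_stdGaussian_prod fun i t ↦ exp (u i * t)]
  simp_rw [integral_exp_mul_gaussianReal]
  simp [prod_exp_sq_div_two]

lemma integrable_exp_dotProduct_smul (u : Fin d → ℝ) :
    Integrable (fun x ↦ exp (u ⬝ᵥ x) • x) (stdGaussian d) := by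
  refine Integrable.of_eval fun j ↦ ?_
  simp_rw [Pi.smul_apply, smul_eq_mul, exp_dotProduct_mul_apply_eq_prod]
  refine integrable_stdGaussian_prod (f := fun i t ↦ (if i = j then t else 1) * exp (u i * t))
    fun i ↦ ?_
  split_ifs
  · exact integrable_mul_exp_mul_gaussianReal (u i)
  · simpa using integrable_exp_mul_gaussianReal (u i)

lemma integral_exp_dotProduct_smul (u : Fin d → ℝ) :
    ∫ x, exp (u ⬝ᵥ x) • x ∂stdGaussian d = exp (u ⬝ᵥ u / 2) • u := by
  ext j
  rw [eval_integral (integrable_exp_dotProduct_smul u).eval]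
  simp_rw [Pi.smul_apply, smul_eq_mul, exp_dotProduct_mul_apply_eq_prod]
  rw [integral_stdGaussian_prod fun i t ↦ (if i = j then t else 1) * exp (u i * t)]
  have hfactor (i : Fin d) : ∫ t, (if i = j then t else 1) * exp (u i * t) ∂gaussianReal 0 1
      = (if i = j then u i else 1) * exp (u i ^ 2 / 2) := by
    split_ifs
    · simpa using integral_mul_exp_mul_gaussianReal (μ := 0) (v := 1) (u i)
    · simpa using integral_exp_mul_gaussianReal (μ := 0) (v := 1) (u i)
  simp_rw [hfactor, Finset.prod_mul_distrib, Finset.prod_ite_eq' Finset.univ j,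
    if_pos (Finset.mem_univ j), prod_exp_sq_div_two, mul_comm]

end StdGaussian

section Affine

variable {d n : ℕ}

lemma integral_exp_dotProduct_smul_add_mulVec (u : Fin d → ℝ) (b : Fin n → ℝ)
    (B : Matrix (Fin n) (Fin d) ℝ) :
    ∫ x, exp (u ⬝ᵥ x) • (b + B *ᵥ x) ∂stdGaussian d = exp (u ⬝ᵥ u / 2) • (b + B *ᵥ u) := by
  let L : (Fin d → ℝ) →L[ℝ] (Fin n → ℝ) := LinearMap.toContinuousLinearMap B.mulVecLin
  have hlinear (x : Fin d → ℝ) : exp (u ⬝ᵥ x) • B *ᵥ x = L (exp (u ⬝ᵥ x) • x) := by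
    simp [L]
  simp_rw [smul_add, hlinear]
  rw [integral_add ((integrable_exp_dotProduct u).smul_const b)
      (L.integrable_comp (integrable_exp_dotProduct_smul u)),
    integral_smul_const, L.integral_comp_comm (integrable_exp_dotProduct_smul u),
    integral_exp_dotProduct, integral_exp_dotProduct_smul]
  simp [L]

lemma gaussianVec_map_add_mulVec (m : Fin d → ℝ) (A B : Matrix (Fin d) (Fin d) ℝ) (b : Fin d → ℝ) :
    (gaussianVec m A).map (fun z ↦ b + B *ᵥ z) = gaussianVec (b + B *ᵥ m) (B * A) := by
  rw [gaussianVec, gaussianVec, Measure.map_map (by fun_prop) (by fun_prop)]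
  congr 1
  ext x
  simp [mulVec_add, mulVec_mulVec, add_assoc]

end Affine

lemma attn_gaussianVec {d : ℕ} (m : Fin d → ℝ) (A K Q V : Matrix (Fin d) (Fin d) ℝ) :
    attn K Q V (gaussianVec m A) = fun z ↦ V *ᵥ m + (V * (A * Aᵀ) * Kᵀ * Q) *ᵥ z := by
  ext1 z
  set c := Q *ᵥ z ⬝ᵥ K *ᵥ m
  set u := (Aᵀ * Kᵀ * Q) *ᵥ z
  have hexponent (x : Fin d → ℝ) : Q *ᵥ z ⬝ᵥ K *ᵥ (m + A *ᵥ x) = c + u ⬝ᵥ x := by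
    rw [mulVec_add, dotProduct_add, mulVec_mulVec, dotProduct_mulVec (Q *ᵥ z) (K * A),
      ← mulVec_transpose, transpose_mul, mulVec_mulVec]
  have hvalue (x : Fin d → ℝ) : V *ᵥ (m + A *ᵥ x) = V *ᵥ m + (V * A) *ᵥ x := by
    rw [mulVec_add, mulVec_mulVec]
  simp only [attn, gaussianVec]
  rw [integral_map (by fun_prop) (by fun_prop), integral_map (by fun_prop) (by fun_prop)]
  simp_rw [hexponent, hvalue, exp_add, mul_smul]
  rw [integral_const_mul, integral_smul, integral_exp_dotProduct,
    integral_exp_dotProduct_smul_add_mulVec, smul_smul, smul_smul, mul_assoc,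
    inv_mul_cancel₀ (by positivity), one_smul]
  simp [u, mulVec_mulVec, Matrix.mul_assoc]

/-- `Γ = A Aᵀ` is the covariance of `gaussianVec m A`, and the covariance
`(V Γ Kᵀ Q) Γ (V Γ Kᵀ Q)ᵀ` of the claimed law is encoded by its factor `V Γ Kᵀ Q A`. -/
theorem pushforward_attention_gaussian {d : ℕ} (m : Fin d → ℝ)
    (A K Q V Γ : Matrix (Fin d) (Fin d) ℝ) (hΓ : Γ = A * Aᵀ) :
    (gaussianVec m A).map (attn K Q V (gaussianVec m A)) =
      gaussianVec ((V * (1 + Γ * Kᵀ * Q)).mulVec m) (V * Γ * Kᵀ * Q * A) := by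
  subst hΓ
  rw [attn_gaussianVec, gaussianVec_map_add_mulVec]
  congr 1
  simp [Matrix.mul_add, add_mulVec, Matrix.mul_assoc]
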